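/- arXiv:0802.0163 — 3 statements merged into one kernel-verified Lean document; each statement's English description precedes it below -/
import Mathlib

section
/- Let V be a 2-dimensional real vector space and R : V × V → End(V) a bilinear alternating map such that the associated Ricci form ρ(u,v) := tr(w ↦ R(w,v)u) is skew-symmetric in (u,v). Then R(u,v) = ρ(u,v) · Id for all u, v ∈ V. -/
theorem stmt_1 (V : Type*) [AddCommGroup V] [Module ℝ V]
    (hdim : Module.finrank ℝ V = 2)
    (R : V →ₗ[ℝ] V →ₗ[ℝ] Module.End ℝ V) (halt : ∀ u : V, R u u = 0)
    (ρ : V → V → ℝ)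
    (hρ : ∀ u v : V, ρ u v = LinearMap.trace ℝ V ((R.flip v).flip u))
    (hskew : ∀ u v : V, ρ u v = - ρ v u) :
    ∀ u v : V, R u v = ρ u v • (1 : Module.End ℝ V) := by
  have hfd : FiniteDimensional ℝ V := FiniteDimensional.of_finrank_eq_succ hdim
  -- R is skew-symmetric
  have hRskew : ∀ u v : V, R u v = - R v u := by
    intro u v
    have h := halt (u + v)
    simp only [map_add, LinearMap.add_apply, halt] at h
    have : R u v + R v u = 0 := by
      rw [← h]; abel
    linear_combination (norm := abel) this
  let b : Module.Basis (Fin 2) ℝ V := Module.finBasisOfFinrankEq ℝ V hdim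
  set A := R (b 0) (b 1) with hAdef
  have hR10 : R (b 1) (b 0) = -A := by rw [hRskew]
  -- trace formula
  have htr : ∀ f : Module.End ℝ V,
      LinearMap.trace ℝ V f = b.repr (f (b 0)) 0 + b.repr (f (b 1)) 1 := by
    intro f
    rw [LinearMap.trace_eq_matrix_trace ℝ b]
    simp [Matrix.trace, Fin.sum_univ_two, LinearMap.toMatrix_apply, Matrix.diag]
  have hρ' : ∀ u v : V, ρ u v = b.repr (R (b 0) v u) 0 + b.repr (R (b 1) v u) 1 := by
    intro u v
    rw [hρ, htr]
    simp [LinearMap.flip_apply]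
  set c := b.repr (A (b 0)) 0 with hc
  -- entry facts
  have h10 : b.repr (A (b 0)) 1 = 0 := by
    have h0 : ρ (b 0) (b 0) = 0 := by
      have := hskew (b 0) (b 0); linarith
    rw [hρ' (b 0) (b 0), halt, hR10] at h0
    simp at h0
    linarith
  have h01 : b.repr (A (b 1)) 0 = 0 := by
    have h0 : ρ (b 1) (b 1) = 0 := by
      have := hskew (b 1) (b 1); linarith
    rw [hρ' (b 1) (b 1), halt] at h0
    simp at h0
    linarith
  have h11 : b.repr (A (b 1)) 1 = c := by
    have h1 : ρ (b 0) (b 1) = c := by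
      rw [hρ' (b 0) (b 1), halt]
      simp [hc, hAdef]
    have h2 : ρ (b 1) (b 0) = - b.repr (A (b 1)) 1 := by
      rw [hρ' (b 1) (b 0), halt, hR10]
      simp
    have := hskew (b 0) (b 1)
    rw [h1, h2] at this
    linarith
  -- A is scalar
  have hA : A = c • (1 : Module.End ℝ V) := by
    apply b.ext
    intro i
    fin_cases i
    · show A (b 0) = c • b 0
      have := b.sum_repr (A (b 0))
      rw [Fin.sum_univ_two] at this
      rw [← this, h10, hc]
      simp
    · show A (b 1) = c • b 1
      have := b.sum_repr (A (b 1))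
      rw [Fin.sum_univ_two] at this
      rw [← this, h01, h11]
      simp
  -- now the general statement
  intro u v
  have hu : u = b.repr u 0 • b 0 + b.repr u 1 • b 1 := by
    have := b.sum_repr u
    rw [Fin.sum_univ_two] at this
    exact this.symm
  have hv : v = b.repr v 0 • b 0 + b.repr v 1 • b 1 := by
    have := b.sum_repr v
    rw [Fin.sum_univ_two] at this
    exact this.symm
  set p0 := b.repr u 0
  set p1 := b.repr u 1
  set q0 := b.repr v 0
  set q1 := b.repr v 1
  have hRuv : R u v = (p0 * q1 - p1 * q0) • A := by
    conv_lhs => rw [hu, hv]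
    simp only [map_add, map_smul, LinearMap.add_apply, LinearMap.smul_apply, halt, hR10,
      smul_zero, smul_neg, ← hAdef]
    module
  have hρuv : ρ u v = (p0 * q1 - p1 * q0) * c := by
    rw [hρ' u v]
    have e0 : R (b 0) v u = q1 • A u := by
      conv_lhs => rw [hv]
      simp [halt, ← hAdef]
    have e1 : R (b 1) v u = -(q0 • A u) := by
      conv_lhs => rw [hv]
      simp [halt, hR10]
    have eAu : A u = p0 • A (b 0) + p1 • A (b 1) := by
      conv_lhs => rw [hu]; simp [map_add, map_smul]
    rw [e0, e1, eAu]
    simp [map_add, map_smul, h10, h01, h11, ← hc]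
    ring
  rw [hRuv, hρuv, hA, smul_smul]
end

section
/- In a 2-dimensional real vector space V, if A, B ∈ sl(V) (traceless endomorphisms) are linearly independent and satisfy [A,B] = A, then A² = 0 and A ≠ 0. -/
/-! In dimension 2, Cayley–Hamilton reads `A ^ 2 = (tr A) • A - (det A) • 1`. For traceless `A`
this makes `A ^ 2` scalar, so `A ^ 2 = 0` as soon as `tr (A ^ 2) = -2 det A` vanishes; and it does,
because `[A, B] = A` exhibits `A ^ 2 = A [A, B] = [A, A B]` as a commutator. -/

open Module Polynomial

namespace LinearMap

variable {R M : Type*} [CommRing R] [AddCommGroup M] [Module R M]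

theorem trace_sq_eq_zero_of_mul_sub_mul_eq_self {A B : End R M} (h : A * B - B * A = A) :
    trace R M (A ^ 2) = 0 := by
  have hcomm : A ^ 2 = A * (A * B) - (A * B) * A := by
    rw [sq]
    nth_rw 2 [← h]
    noncomm_ring
  rw [hcomm, map_sub, trace_mul_comm, sub_self]

variable [Module.Free R M] [Module.Finite R M]

theorem charpoly_of_finrank_eq_two [Nontrivial R] (h : finrank R M = 2) (f : End R M) :
    f.charpoly = X ^ 2 - C (trace R M f) * X + C f.det := by
  let b := Module.Free.chooseBasis R M
  rw [← charpoly_toMatrix f b, Matrix.charpoly_of_card_eq_two, trace_eq_matrix_trace R b,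
    det_toMatrix b]
  rwa [← finrank_eq_card_chooseBasisIndex]

theorem sq_eq_trace_smul_sub_det_smul [Nontrivial R] (h : finrank R M = 2) (f : End R M) :
    f ^ 2 = trace R M f • f - f.det • 1 := by
  have := f.aeval_self_charpoly
  rw [charpoly_of_finrank_eq_two h] at this
  simp only [map_add, map_sub, map_mul, map_pow, aeval_X, aeval_C, Algebra.algebraMap_eq_smul_one,
    smul_mul_assoc, one_mul] at this
  rw [← sub_eq_zero, ← this]
  abel

theorem sq_eq_zero_of_trace_eq_zero [IsDomain R] [NeZero (2 : R)] (h : finrank R M = 2)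
    {f : End R M} (hf : trace R M f = 0) (hf2 : trace R M (f ^ 2) = 0) : f ^ 2 = 0 := by
  have hsq := sq_eq_trace_smul_sub_det_smul h f
  rw [hf, zero_smul, zero_sub] at hsq
  have hdet : f.det = 0 := by
    rw [hsq, map_neg, map_smul, trace_one, h, smul_eq_mul, neg_eq_zero, Nat.cast_ofNat] at hf2
    exact (mul_eq_zero.mp hf2).resolve_right two_ne_zero
  rw [hsq, hdet, zero_smul, neg_zero]

end LinearMap

theorem stmt_2_general (V : Type*) [AddCommGroup V] [Module ℝ V]
    (hdim : Module.finrank ℝ V = 2)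
    (A B : Module.End ℝ V)
    (hA : LinearMap.trace ℝ V A = 0)
    (hind : LinearIndependent ℝ ![A, B])
    (hbr : A * B - B * A = A) :
    A * A = 0 ∧ A ≠ 0 := by
  have : FiniteDimensional ℝ V := .of_finrank_pos (by omega)
  refine ⟨?_, by simpa using hind.ne_zero 0⟩
  rw [← sq]
  exact LinearMap.sq_eq_zero_of_trace_eq_zero hdim hA
    (LinearMap.trace_sq_eq_zero_of_mul_sub_mul_eq_self hbr)

theorem stmt_2 (V : Type*) [AddCommGroup V] [Module ℝ V]
    (hdim : Module.finrank ℝ V = 2)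
    (A B : Module.End ℝ V)
    (hA : LinearMap.trace ℝ V A = 0) (hB : LinearMap.trace ℝ V B = 0)
    (hind : LinearIndependent ℝ ![A, B])
    (hbr : A * B - B * A = A) :
    A * A = 0 ∧ A ≠ 0 :=
  stmt_2_general V hdim A B hA hind hbr
end

section
/- Let Π be a 2-dimensional real vector space and ζ, η ∈ Π* linearly independent. The map x ↦ d(η/ζ)(x) = ζ(x)^{-2}·(ζ(x)·η − η(x)·ζ) is a bijection (indeed a diffeomorphism) from {x ∈ Π : ζ(x) ≠ 0} onto {ξ ∈ Π* : ξ(w) ≠ 0}, where (v,w) is the basis of Π dual to (ζ,η); its inverse is ξ ↦ ξ(w)^{-2}·(ξ(w)·v − ξ(v)·w). -/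
/-!
In the coordinates `a = ζ x`, `b = η x` on `Π` and `ξ v`, `ξ w` on `Π*`, the map `x ↦ d(η/ζ)(x)`
reads `(a, b) ↦ (ξ w, ξ v) = (a⁻¹, -a⁻² b)`, and the proposed inverse reads the same way with the
roles of the two spaces exchanged. So both composites are the map `(a, b) ↦ (a⁻¹, -a⁻² b)` applied
twice, which is the identity on `a ≠ 0`; it remains to know that a vector (resp. a functional) is
determined by these coordinates, which is where `dim Π = 2` enters.
-/

section DualPair

variable {K P : Type*} [Field K] [AddCommGroup P] [Module K P]

theorem linearIndependent_pair_of_dual {ζ η : P →ₗ[K] K} {v w : P}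
    (hζv : ζ v = 1) (hζw : ζ w = 0) (hηv : η v = 0) (hηw : η w = 1) :
    LinearIndependent K ![v, w] := by
  refine LinearIndependent.pair_iff.mpr fun a b hab => ⟨?_, ?_⟩
  · simpa [hζv, hζw] using congrArg ζ hab
  · simpa [hηv, hηw] using congrArg η hab

theorem eq_smul_add_smul_of_dual_of_finrank_eq_two (hdim : Module.finrank K P = 2)
    {ζ η : P →ₗ[K] K} {v w : P}
    (hζv : ζ v = 1) (hζw : ζ w = 0) (hηv : η v = 0) (hηw : η w = 1) (x : P) :
    x = ζ x • v + η x • w := by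
  have hspan : Submodule.span K {v, w} = ⊤ := by
    simpa [Matrix.range_cons, Matrix.range_empty, Set.union_singleton, Set.pair_comm] using
      (linearIndependent_pair_of_dual hζv hζw hηv hηw).span_eq_top_of_card_eq_finrank
        (by simp [hdim])
  obtain ⟨a, b, rfl⟩ := Submodule.mem_span_pair.mp (hspan ▸ Submodule.mem_top : x ∈ _)
  simp [hζv, hζw, hηv, hηw]

theorem dual_eq_smul_add_smul_of_finrank_eq_two (hdim : Module.finrank K P = 2)
    {ζ η : P →ₗ[K] K} {v w : P}
    (hζv : ζ v = 1) (hζw : ζ w = 0) (hηv : η v = 0) (hηw : η w = 1) (ξ : P →ₗ[K] K) :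
    ξ = ξ v • ζ + ξ w • η := by
  ext x
  conv_lhs => rw [eq_smul_add_smul_of_dual_of_finrank_eq_two hdim hζv hζw hηv hηw x]
  simp only [map_add, map_smul, LinearMap.add_apply, LinearMap.smul_apply, smul_eq_mul]
  ring

end DualPair

theorem inv_inv_sq_smul_sub_neg_smul {K M : Type*} [Field K] [AddCommGroup M] [Module K M]
    {a : K} (ha : a ≠ 0) (b : K) (p q : M) :
    (a⁻¹)⁻¹ ^ 2 • (a⁻¹ • p - (-(a⁻¹ ^ 2 * b)) • q) = a • p + b • q := by
  rw [inv_inv, neg_smul, sub_neg_eq_add, smul_add, smul_smul, smul_smul]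
  congr 2 <;> field_simp

theorem stmt_14_general (P : Type*) [AddCommGroup P] [Module ℝ P]
    (hdim : Module.finrank ℝ P = 2)
    (ζ η : P →ₗ[ℝ] ℝ)
    (v w : P) (hζv : ζ v = 1) (hζw : ζ w = 0) (hηv : η v = 0) (hηw : η w = 1)
    (F : P → (P →ₗ[ℝ] ℝ)) (hF : ∀ x : P, F x = (ζ x)⁻¹ ^ 2 • (ζ x • η - η x • ζ))
    (G : (P →ₗ[ℝ] ℝ) → P) (hG : ∀ ξ : P →ₗ[ℝ] ℝ, G ξ = (ξ w)⁻¹ ^ 2 • (ξ w • v - ξ v • w)) :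
    (∀ x : P, ζ x ≠ 0 → (F x) w ≠ 0 ∧ G (F x) = x) ∧
    (∀ ξ : P →ₗ[ℝ] ℝ, ξ w ≠ 0 → ζ (G ξ) ≠ 0 ∧ F (G ξ) = ξ) := by
  refine ⟨fun x hx => ?_, fun ξ hξ => ?_⟩
  · have hFw : F x w = (ζ x)⁻¹ := by
      simp [hF, hζw, hηw, sq, inv_mul_cancel_right₀ hx]
    have hFv : F x v = -((ζ x)⁻¹ ^ 2 * η x) := by simp [hF, hζv, hηv]
    refine ⟨hFw ▸ inv_ne_zero hx, ?_⟩
    rw [hG, hFw, hFv, inv_inv_sq_smul_sub_neg_smul hx,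
      ← eq_smul_add_smul_of_dual_of_finrank_eq_two hdim hζv hζw hηv hηw x]
  · have hζG : ζ (G ξ) = (ξ w)⁻¹ := by
      simp [hG, hζv, hζw, sq, inv_mul_cancel_right₀ hξ]
    have hηG : η (G ξ) = -((ξ w)⁻¹ ^ 2 * ξ v) := by simp [hG, hηv, hηw]
    refine ⟨hζG ▸ inv_ne_zero hξ, ?_⟩
    rw [hF, hζG, hηG]
    exact (inv_inv_sq_smul_sub_neg_smul hξ _ _ _).trans <| (add_comm _ _).trans
      (dual_eq_smul_add_smul_of_finrank_eq_two hdim hζv hζw hηv hηw ξ).symm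

theorem stmt_14 (P : Type*) [AddCommGroup P] [Module ℝ P]
    (hdim : Module.finrank ℝ P = 2)
    (ζ η : P →ₗ[ℝ] ℝ) (hind : LinearIndependent ℝ ![ζ, η])
    (v w : P) (hζv : ζ v = 1) (hζw : ζ w = 0) (hηv : η v = 0) (hηw : η w = 1)
    (F : P → (P →ₗ[ℝ] ℝ)) (hF : ∀ x : P, F x = (ζ x)⁻¹ ^ 2 • (ζ x • η - η x • ζ))
    (G : (P →ₗ[ℝ] ℝ) → P) (hG : ∀ ξ : P →ₗ[ℝ] ℝ, G ξ = (ξ w)⁻¹ ^ 2 • (ξ w • v - ξ v • w)) :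
    (∀ x : P, ζ x ≠ 0 → (F x) w ≠ 0 ∧ G (F x) = x) ∧
    (∀ ξ : P →ₗ[ℝ] ℝ, ξ w ≠ 0 → ζ (G ξ) ≠ 0 ∧ F (G ξ) = ξ) :=
  stmt_14_general P hdim ζ η v w hζv hζw hηv hηw F hF G hG
end
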